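/- arXiv:2404.05804 — 3 statements merged into one kernel-verified Lean document; each statement's English description precedes it below -/
import Mathlib

section
/- Let E be a group fitting in a short exact sequence 1 → Z^4 → E → Q → 1 where Q is a finite group of order 24, and suppose E contains an element t mapping to the unique order-2 element of Q, acting trivially by conjugation on Z^4, and such that t^2 = e_1 e_2 e_3 e_4 where (e_1, e_2, e_3, e_4) is a basis of Z^4. Then E contains no element of order 2. -/
/-!
An involution `g` of `E` maps to an element of order dividing 2 in `Q`. It cannot lie in the
torsion-free kernel, so it lies in the coset `t A`, say `g = t a`. As `t` centralises `A`,
`1 = g² = t² a²`, making `t² = e₁e₂e₃e₄` a square in `ℤ⁴`, although its coordinates are odd.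
-/

open Multiplicative

lemma orderOf_le_one_of_mem_range {M G : Type*} [CommGroup M] [IsMulTorsionFree M] [Group G]
    (f : M →* G) (hf : Function.Injective f) {a : G} (ha : a ∈ f.range) : orderOf a ≤ 1 := by
  obtain ⟨x, rfl⟩ := ha
  rw [orderOf_injective f hf]
  exact IsMulTorsionFree.orderOf_le_one x

lemma ofAdd_ne_sq_of_odd {ι : Type*} (w : ι → ℤ) {i : ι} (hw : Odd (w i))
    (v : Multiplicative (ι → ℤ)) : ofAdd w ≠ v ^ 2 := by
  intro h
  have hwi : w i = 2 * toAdd v i := by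
    simpa [two_mul] using congrFun (congrArg toAdd h) i
  exact Int.not_even_iff_odd.mpr hw ⟨toAdd v i, by omega⟩

theorem stmt_6_general {E : Type*} [Group E] (A : Subgroup E) [A.Normal]
    -- a basis of the free abelian normal subgroup A of rank 4
    (f : Multiplicative (Fin 4 → ℤ) →* E)
    (hf_inj : Function.Injective f) (hf_range : f.range = A)
    (e : Fin 4 → E) (he : ∀ i, e i = f (Multiplicative.ofAdd (Pi.single i 1)))
    (t : E)
    -- t maps to the unique element of order 2 in Q
    (ht_unique : ∀ q : E ⧸ A, orderOf q = 2 → q = QuotientGroup.mk t)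
    -- t acts trivially by conjugation on A
    (ht_conj : ∀ a ∈ A, t * a * t⁻¹ = a)
    -- t² = e₁e₂e₃e₄
    (ht_sq : t ^ 2 = e 0 * e 1 * e 2 * e 3) :
    ∀ g : E, orderOf g ≠ 2 := by
  intro g hg
  have hg_sq : g ^ 2 = 1 := hg ▸ pow_orderOf_eq_one g
  have hdvd : orderOf (g : E ⧸ A) ∣ 2 := hg ▸ orderOf_map_dvd (QuotientGroup.mk' A) g
  rcases (Nat.dvd_prime Nat.prime_two).mp hdvd with h_one | h_two
  · have hgA : g ∈ f.range :=
      hf_range ▸ (QuotientGroup.eq_one_iff g).mp (orderOf_eq_one_iff.mp h_one)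
    have := orderOf_le_one_of_mem_range f hf_inj hgA
    omega
  · obtain ⟨a, haA, rfl⟩ : ∃ a ∈ A, g = t * a :=
      ⟨t⁻¹ * g, QuotientGroup.eq.mp (ht_unique _ h_two).symm, by group⟩
    have hcomm : Commute t a := mul_inv_eq_iff_eq_mul.mp (ht_conj a haA)
    rw [← hf_range] at haA
    obtain ⟨v, rfl⟩ := haA
    have h_basis : e 0 * e 1 * e 2 * e 3 = f (ofAdd 1) := by
      simp only [he, ← map_mul, ← ofAdd_add]
      congr 2
      ext i
      fin_cases i <;> rfl
    refine ofAdd_ne_sq_of_odd 1 (i := 0) odd_one v⁻¹ (hf_inj ?_)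
    rw [map_pow, map_inv, inv_pow, ← h_basis, ← ht_sq]
    exact eq_inv_of_mul_eq_one_left (hcomm.mul_pow 2 ▸ hg_sq)

/-- Let `1 → ℤ⁴ → E → Q → 1` with `Q` finite of order 24, and let
`t ∈ E` map to the unique order-2 element of `Q`, act trivially by conjugation on
`ℤ⁴`, and satisfy `t² = e₁e₂e₃e₄` where `(e₁,e₂,e₃,e₄)` is a basis of `ℤ⁴`.
Then `E` has no element of order 2. -/
theorem stmt_6 {E : Type*} [Group E] (A : Subgroup E) [A.Normal]
    [Finite (E ⧸ A)] (hQ : Nat.card (E ⧸ A) = 24)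
    -- a basis of the free abelian normal subgroup A of rank 4
    (f : Multiplicative (Fin 4 → ℤ) →* E)
    (hf_inj : Function.Injective f) (hf_range : f.range = A)
    (e : Fin 4 → E) (he : ∀ i, e i = f (Multiplicative.ofAdd (Pi.single i 1)))
    (t : E)
    -- t maps to the unique element of order 2 in Q
    (ht_ord : orderOf (QuotientGroup.mk t : E ⧸ A) = 2)
    (ht_unique : ∀ q : E ⧸ A, orderOf q = 2 → q = QuotientGroup.mk t)
    -- t acts trivially by conjugation on A
    (ht_conj : ∀ a ∈ A, t * a * t⁻¹ = a)
    -- t² = e₁e₂e₃e₄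
    (ht_sq : t ^ 2 = e 0 * e 1 * e 2 * e 3) :
    ∀ g : E, orderOf g ≠ 2 :=
  stmt_6_general A f hf_inj hf_range e he t ht_unique ht_conj ht_sq
end

section
/- Let E be a group with normal subgroup A ≅ Z^4 with ordered basis (e_1, e_2, e_3, e_4), and let s ∈ E with s^3 = e_1, and suppose conjugation by s fixes e_1 and cyclically permutes e_2 → e_3 → e_4 → e_2 (equivalently, for the element s, s e_2 s^{-1} = e_3, s e_3 s^{-1} = e_4, s e_4 s^{-1} = e_2). Then no element of the coset A·s has order 3 in E. -/
/-- Let `E` have a normal subgroup `A ≅ ℤ⁴` with ordered basis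
`(e₁,e₂,e₃,e₄)`, and let `s ∈ E` with `s³ = e₁`, conjugation by `s` fixing `e₁`
and cyclically permuting `e₂ → e₃ → e₄ → e₂`. Then no element of the coset `A·s`
has order 3 in `E`. -/
theorem stmt_7 {E : Type*} [Group E] (A : Subgroup E) [A.Normal]
    -- a basis of the free abelian normal subgroup A of rank 4
    (f : Multiplicative (Fin 4 → ℤ) →* E)
    (hf_inj : Function.Injective f) (hf_range : f.range = A)
    (e : Fin 4 → E) (he : ∀ i, e i = f (Multiplicative.ofAdd (Pi.single i 1)))
    (s : E) (hs3 : s ^ 3 = e 0)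
    (hconj0 : s * e 0 * s⁻¹ = e 0)
    (hconj1 : s * e 1 * s⁻¹ = e 2)
    (hconj2 : s * e 2 * s⁻¹ = e 3)
    (hconj3 : s * e 3 * s⁻¹ = e 1) :
    ∀ v ∈ A, orderOf (v * s) ≠ 3 := by
  intro v hv h3
  rw [← hf_range] at hv
  obtain ⟨x, rfl⟩ := hv
  set F : (Fin 4 → ℤ) → E := fun y => f (Multiplicative.ofAdd y) with hF
  have Fadd : ∀ a b : Fin 4 → ℤ, F (a + b) = F a * F b := by
    intro a b; simp only [hF, ofAdd_add, map_mul]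
  have Fsingle : ∀ (i : Fin 4) (c : ℤ), F (Pi.single i c) = e i ^ c := by
    intro i c
    have h1 : (Pi.single i c : Fin 4 → ℤ) = c • Pi.single i 1 := by
      funext j; by_cases h : j = i <;> simp [h, Pi.single_apply]
    rw [hF]; simp only [h1, ofAdd_zsmul, map_zpow, he]
  have hdecomp : ∀ y : Fin 4 → ℤ,
      y = Pi.single 0 (y 0) + Pi.single 1 (y 1) + Pi.single 2 (y 2) + Pi.single 3 (y 3) := by
    intro y; funext j; fin_cases j <;> simp [Pi.single_apply]
  have hconj : ∀ y : Fin 4 → ℤ,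
      s * F y * s⁻¹ = F (fun j => y (![0, 3, 1, 2] j)) := by
    intro y
    have hFy : F y = e 0 ^ (y 0) * e 1 ^ (y 1) * e 2 ^ (y 2) * e 3 ^ (y 3) := by
      conv_lhs => rw [hdecomp y]
      rw [Fadd, Fadd, Fadd, Fsingle, Fsingle, Fsingle, Fsingle]
    have hc : (MulAut.conj s) (F y) = s * F y * s⁻¹ := rfl
    rw [← hc, hFy]
    simp only [map_mul, map_zpow, MulAut.conj_apply, hconj0, hconj1, hconj2, hconj3]
    rw [← Fsingle 0 (y 0), ← Fsingle 2 (y 1), ← Fsingle 3 (y 2), ← Fsingle 1 (y 3),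
      ← Fadd, ← Fadd, ← Fadd]
    congr 1
    funext j; fin_cases j <;> simp [Pi.single_apply]
  have hfx : f x = F (Multiplicative.toAdd x) := by simp [hF]
  have expand : (f x * s) ^ 3
      = f x * (s * f x * s⁻¹) * (s * (s * f x * s⁻¹) * s⁻¹) * s ^ 3 := by
    simp only [pow_succ, pow_zero, one_mul]; group
  set y : Fin 4 → ℤ := Multiplicative.toAdd x with hy
  have he0 : e 0 = F (Pi.single 0 1) := by rw [Fsingle 0 1, zpow_one]
  have key : (f x * s) ^ 3
      = F (y + (fun j => y (![0,3,1,2] j)) + (fun j => (fun j' => y (![0,3,1,2] j')) (![0,3,1,2] j)) + Pi.single 0 1) := by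
    rw [expand, hfx, hconj, hconj, hs3, he0, ← Fadd, ← Fadd, ← Fadd]
  have hone : (f x * s) ^ 3 = 1 := by rw [← h3]; exact pow_orderOf_eq_one _
  rw [key] at hone
  have hF1 : F 0 = 1 := by simp [hF]
  rw [← hF1] at hone
  have hz : (y + (fun j => y (![0,3,1,2] j)) + (fun j => (fun j' => y (![0,3,1,2] j')) (![0,3,1,2] j)) + Pi.single 0 1) = (0 : Fin 4 → ℤ) :=
    Multiplicative.ofAdd.injective (hf_inj hone)
  have h0 := congrFun hz 0
  simp [Pi.single_apply] at h0
  omega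
end

section
/- The group with presentation ⟨a, b | a^4 = 1, b^4 = 1, aba = bab, [a^2, b^2] = 1⟩ has order 48, its center has order 2, and the quotient by its center is isomorphic to the symmetric group S_4. -/
/-- Generator `a` of the free group on two generators. -/
def stmt9a : FreeGroup (Fin 2) := FreeGroup.of 0

/-- Generator `b` of the free group on two generators. -/
def stmt9b : FreeGroup (Fin 2) := FreeGroup.of 1

open scoped commutatorElement in
/-- The relations `a⁴, b⁴, aba(bab)⁻¹, [a²,b²]`. -/
def stmt9Rels : Set (FreeGroup (Fin 2)) :=
  { stmt9a ^ 4, stmt9b ^ 4,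
    (stmt9a * stmt9b * stmt9a) * (stmt9b * stmt9a * stmt9b)⁻¹,
    ⁅stmt9a ^ 2, stmt9b ^ 2⁆ }

/-!
The conjugates of `a²` are `a²`, `b²` and `a b² a⁻¹`: conjugation by `a` and by `b` permutes
these three commuting involutions (this is where `aba = bab` and `[a², b²] = 1` enter), so they
generate a normal subgroup `N` of order at most 8, and `G ⧸ N` is generated by two involutions
satisfying the braid relation, so it has order at most 6. Hence `|G| ≤ 48`.

Conversely, `a ↦ (0 1 2 3)` and `b ↦ (0 1) (0 1 2 3) (0 1)` define a surjection onto `S₄` with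
`aba ↦ (0 1)`, so `(aba)²` lies in its kernel; it is nontrivial because it maps to `-1` under
`a ↦ [[1, 1], [0, 1]]`, `b ↦ [[1, 0], [-1, 1]]` into `SL₂(ℤ/4)`. So `|G| = 48` and the
kernel has order 2. A normal subgroup of order 2 is central, and `S₄` has trivial center, so the
kernel is the center.
-/

open scoped Pointwise

variable {G : Type*} [Group G]

namespace Subgroup

theorem coe_closure_insert_of_commute {x : G} {S : Set G} (hx : ∀ s ∈ S, Commute x s) :
    (closure (insert x S) : Set G) = (zpowers x : Set G) * (closure S : Set G) := by
  have hnorm : zpowers x ≤ normalizer (closure S) := by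
    rw [zpowers_le]
    apply normalizer_le_normalizer_closure
    rw [mem_normalizer_iff_conj_image_eq]
    conv_rhs => rw [← Set.image_id S]
    exact Set.image_congr fun s hs => by
      rw [MulAut.conj_apply, (hx s hs).eq, mul_inv_cancel_right]; rfl
  rw [Set.insert_eq, closure_union, ← zpowers_eq_closure,
    coe_mul_of_left_le_normalizer_right _ _ hnorm]

theorem le_center_of_card_eq_two {N : Subgroup G} [N.Normal] (h : Nat.card N = 2) :
    N ≤ center G := by
  intro n hn
  rw [mem_center_iff]
  intro g
  by_cases hn1 : n = 1
  · rw [hn1, one_mul, mul_one]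
  obtain ⟨u, -, hu⟩ := (Nat.card_eq_two_iff' (1 : N)).mp h
  have hconj : g * n * g⁻¹ ∈ N := Normal.conj_mem ‹_› n hn g
  have hn_eq := hu ⟨n, hn⟩ (by simpa [Subtype.ext_iff] using hn1)
  have hconj_eq := hu ⟨_, hconj⟩ (by simpa [Subtype.ext_iff] using hn1)
  exact mul_inv_eq_iff_eq_mul.mp (congrArg Subtype.val (hconj_eq.trans hn_eq.symm))

end Subgroup

open Subgroup

theorem surjective_of_involutions_braid {s t : G} (hs : s * s = 1) (ht : t * t = 1)
    (hst : s * t * s = t * s * t) (hgen : closure {s, t} = ⊤) :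
    Function.Surjective ![1, s, t, s * t, t * s, t * s * t] := by
  have htt (g : G) : t * (t * g) = g := by rw [← mul_assoc, ht, one_mul]
  have hst' : s * (t * s) = t * (s * t) := by simp only [← mul_assoc, hst]
  have hmul : ∀ g ∈ Set.range ![1, s, t, s * t, t * s, t * s * t],
      g * s ∈ Set.range ![1, s, t, s * t, t * s, t * s * t] ∧
      g * t ∈ Set.range ![1, s, t, s * t, t * s, t * s * t] := by
    rintro _ ⟨i, rfl⟩
    fin_cases i <;> simp [mul_assoc, hs, ht, htt, hst']
  intro g
  induction (hgen ▸ mem_top g : g ∈ closure {s, t}) using closure_induction_right with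
  | one => exact ⟨0, rfl⟩
  | mul_right g _ x hx ih => rcases hx with rfl | rfl; exacts [(hmul g ih).1, (hmul g ih).2]
  | mul_inv_cancel g _ x hx ih =>
    rcases hx with rfl | rfl
    · rw [inv_eq_of_mul_eq_one_right hs]; exact (hmul g ih).1
    · rw [inv_eq_of_mul_eq_one_right ht]; exact (hmul g ih).2

section BraidRelations

variable {a b : G}

def squareConjugates (a b : G) : Set G := {a ^ 2, b ^ 2, a * b ^ 2 * a⁻¹}

theorem conj_sq_eq_of_braid (hab : a * b * a = b * a * b) (hc : Commute (a ^ 2) (b ^ 2)) :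
    b * a ^ 2 * b⁻¹ = a * b ^ 2 * a⁻¹ := by
  have hconj : b * a * b⁻¹ = a⁻¹ * b * a⁻¹⁻¹ := by
    rw [inv_inv, mul_inv_eq_iff_eq_mul, mul_assoc a⁻¹, mul_assoc a⁻¹, eq_inv_mul_iff_mul_eq,
      ← mul_assoc]
    exact hab
  calc b * a ^ 2 * b⁻¹ = a⁻¹ * b ^ 2 * a := by rw [← conj_pow, hconj, conj_pow, inv_inv]
    _ = a⁻¹ * (b ^ 2 * a ^ 2) * a⁻¹ := by group
    _ = a * b ^ 2 * a⁻¹ := by rw [← hc.eq]; group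

theorem conj_mem_squareConjugates_left (hc : Commute (a ^ 2) (b ^ 2)) :
    ∀ g ∈ squareConjugates a b, a * g * a⁻¹ ∈ squareConjugates a b := by
  rintro _ (rfl | rfl | rfl)
  · left; group
  · right; right; rfl
  · right; left
    calc a * (a * b ^ 2 * a⁻¹) * a⁻¹ = a ^ 2 * b ^ 2 * (a ^ 2)⁻¹ := by
          simp only [sq]; group
      _ = b ^ 2 := by rw [hc.eq, mul_inv_cancel_right]

theorem conj_mem_squareConjugates_right (hab : a * b * a = b * a * b)
    (hc : Commute (a ^ 2) (b ^ 2)) :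
    ∀ g ∈ squareConjugates a b, b * g * b⁻¹ ∈ squareConjugates a b := by
  rintro _ (rfl | rfl | rfl)
  · right; right; exact conj_sq_eq_of_braid hab hc
  · right; left; group
  · left
    calc b * (a * b ^ 2 * a⁻¹) * b⁻¹ = b ^ 2 * a ^ 2 * (b ^ 2)⁻¹ := by
          rw [← conj_sq_eq_of_braid hab hc]; simp only [sq]; group
      _ = a ^ 2 := by rw [← hc.eq, mul_inv_cancel_right]

theorem closure_squareConjugates_normal (hgen : closure {a, b} = ⊤)
    (hab : a * b * a = b * a * b) (hc : Commute (a ^ 2) (b ^ 2)) :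
    (closure (squareConjugates a b)).Normal := by
  have : Finite (squareConjugates a b) := by unfold squareConjugates; infer_instance
  rw [← normalizer_eq_top_iff, eq_top_iff, ← hgen, closure_le, Set.insert_subset_iff,
    Set.singleton_subset_iff]
  exact ⟨normalizer_le_normalizer_closure _ (mem_normalizer_fintype
      (conj_mem_squareConjugates_left hc)),
    normalizer_le_normalizer_closure _ (mem_normalizer_fintype
      (conj_mem_squareConjugates_right hab hc))⟩

theorem coe_closure_squareConjugates (hab : a * b * a = b * a * b)
    (hc : Commute (a ^ 2) (b ^ 2)) :
    (closure (squareConjugates a b) : Set G) =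
      (zpowers (a ^ 2) : Set G) * ((zpowers (b ^ 2) : Set G) * zpowers (a * b ^ 2 * a⁻¹)) := by
  have hxw : Commute (a ^ 2) (a * b ^ 2 * a⁻¹) :=
    ((Commute.refl a).pow_left 2 |>.mul_right hc).mul_right ((Commute.refl a).pow_left 2).inv_right
  have hyw : Commute (b ^ 2) (a * b ^ 2 * a⁻¹) := by
    rw [← conj_sq_eq_of_braid hab hc]
    exact ((Commute.refl b).pow_left 2 |>.mul_right hc.symm).mul_right
      ((Commute.refl b).pow_left 2).inv_right
  rw [squareConjugates, coe_closure_insert_of_commute (by simp [hc, hxw]),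
    coe_closure_insert_of_commute (by simp [hyw]), ← zpowers_eq_closure]

theorem sq_eq_one_of_mem_squareConjugates (ha : a ^ 4 = 1) (hb : b ^ 4 = 1) :
    ∀ g ∈ squareConjugates a b, g ^ 2 = 1 := by
  rintro _ (rfl | rfl | rfl)
  · rw [← pow_mul, ha]
  · rw [← pow_mul, hb]
  · rw [conj_pow, ← pow_mul, hb, mul_one, mul_inv_cancel]

theorem finite_closure_squareConjugates (ha : a ^ 4 = 1) (hb : b ^ 4 = 1)
    (hab : a * b * a = b * a * b) (hc : Commute (a ^ 2) (b ^ 2)) :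
    Finite (closure (squareConjugates a b)) := by
  have hfin : ∀ g ∈ squareConjugates a b, IsOfFinOrder g := fun g hg =>
    isOfFinOrder_iff_pow_eq_one.mpr ⟨2, two_pos, sq_eq_one_of_mem_squareConjugates ha hb g hg⟩
  refine Set.Finite.to_subtype ?_
  rw [coe_closure_squareConjugates hab hc]
  exact (hfin _ (.inl rfl)).finite_zpowers.mul
    ((hfin _ (.inr (.inl rfl))).finite_zpowers.mul (hfin _ (.inr (.inr rfl))).finite_zpowers)

theorem card_closure_squareConjugates_le (ha : a ^ 4 = 1) (hb : b ^ 4 = 1)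
    (hab : a * b * a = b * a * b) (hc : Commute (a ^ 2) (b ^ 2)) :
    Nat.card (closure (squareConjugates a b)) ≤ 8 := by
  have hord : ∀ g ∈ squareConjugates a b, Nat.card (zpowers g) ≤ 2 := fun g hg => by
    rw [Nat.card_zpowers]
    exact orderOf_le_of_pow_eq_one two_pos (sq_eq_one_of_mem_squareConjugates ha hb g hg)
  calc Nat.card (closure (squareConjugates a b))
      = Nat.card ((zpowers (a ^ 2) : Set G) *
          ((zpowers (b ^ 2) : Set G) * zpowers (a * b ^ 2 * a⁻¹)) : Set G) := by
        rw [← coe_closure_squareConjugates hab hc]; rfl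
    _ ≤ Nat.card (zpowers (a ^ 2)) *
          (Nat.card (zpowers (b ^ 2)) * Nat.card (zpowers (a * b ^ 2 * a⁻¹))) :=
        Set.natCard_mul_le.trans (Nat.mul_le_mul_left _ Set.natCard_mul_le)
    _ ≤ 2 * (2 * 2) := by
      gcongr
      exacts [hord _ (.inl rfl), hord _ (.inr (.inl rfl)), hord _ (.inr (.inr rfl))]

theorem surjective_quotient_squareConjugates [(closure (squareConjugates a b)).Normal]
    (hgen : closure {a, b} = ⊤) (hab : a * b * a = b * a * b) :
    Function.Surjective (![1, a, b, a * b, b * a, b * a * b] :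
      Fin 6 → G ⧸ closure (squareConjugates a b)) := by
  have hsq : ∀ g ∈ squareConjugates a b, (g : G ⧸ closure (squareConjugates a b)) = 1 :=
    fun g hg => (QuotientGroup.eq_one_iff g).mpr (subset_closure hg)
  apply surjective_of_involutions_braid
  · rw [← QuotientGroup.mk_mul, ← sq]; exact hsq _ (.inl rfl)
  · rw [← QuotientGroup.mk_mul, ← sq]; exact hsq _ (.inr (.inl rfl))
  · simp only [← QuotientGroup.mk_mul, hab]
  · have h := (QuotientGroup.mk' (closure (squareConjugates a b))).map_closure {a, b}
    rw [Set.image_pair, hgen, ← MonoidHom.range_eq_map, QuotientGroup.range_mk'] at h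
    exact h.symm

theorem finite_and_card_le_48_of_braid (hgen : closure {a, b} = ⊤) (ha : a ^ 4 = 1)
    (hb : b ^ 4 = 1) (hab : a * b * a = b * a * b) (hc : Commute (a ^ 2) (b ^ 2)) :
    Finite G ∧ Nat.card G ≤ 48 := by
  have := closure_squareConjugates_normal hgen hab hc
  have := finite_closure_squareConjugates ha hb hab hc
  have hQ := surjective_quotient_squareConjugates hgen hab
  have := Finite.of_surjective _ hQ
  have hcard := card_eq_card_quotient_mul_card_subgroup (closure (squareConjugates a b))
  refine ⟨Nat.finite_of_card_ne_zero ?_, ?_⟩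
  · rw [hcard]
    exact mul_ne_zero Nat.card_pos.ne' Nat.card_pos.ne'
  · rw [hcard]
    exact Nat.mul_le_mul ((Nat.card_le_card_of_surjective _ hQ).trans_eq (Nat.card_fin 6))
      (card_closure_squareConjugates_le ha hb hab hc)

end BraidRelations

namespace Stmt9

open Equiv PresentedGroup

local notation "P" => PresentedGroup stmt9Rels

theorem closure_of_eq_top : closure {(of 0 : P), of 1} = ⊤ := by
  rw [← closure_range_of]
  congr
  ext
  simp [Fin.exists_fin_two, eq_comm]

theorem relations :
    (of 0 : P) ^ 4 = 1 ∧ (of 1 : P) ^ 4 = 1 ∧ (of 0 : P) * of 1 * of 0 = of 1 * of 0 * of 1 ∧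
      Commute ((of 0 : P) ^ 2) (of 1 ^ 2) := by
  have h {r} (hr : r ∈ stmt9Rels) : PresentedGroup.mk stmt9Rels r = 1 := one_of_mem hr
  refine ⟨h (.inl rfl), h (.inr (.inl rfl)), mul_inv_eq_one.mp (h (.inr (.inr (.inl rfl)))), ?_⟩
  have hc := h (.inr (.inr (.inr rfl)))
  rwa [map_commutatorElement, commutatorElement_eq_one_iff_mul_comm] at hc

section Lift

variable {H : Type*} [Group H] {x y : H} (hx : x ^ 4 = 1) (hy : y ^ 4 = 1)
  (hxy : x * y * x = y * x * y) (hc : Commute (x ^ 2) (y ^ 2))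

open scoped commutatorElement in
def lift : P →* H :=
  toGroup (f := ![x, y]) <| by
    rintro r (rfl | rfl | rfl | rfl) <;>
      simp [stmt9a, stmt9b, hx, hy, hxy, commutatorElement_eq_one_iff_mul_comm, hc.eq]

@[simp]
theorem lift_of_zero : lift hx hy hxy hc (of 0) = x := toGroup.of _

@[simp]
theorem lift_of_one : lift hx hy hxy hc (of 1) = y := toGroup.of _

end Lift

open Matrix in
def matA : SpecialLinearGroup (Fin 2) (ZMod 4) := ⟨!![1, 1; 0, 1], by decide⟩

open Matrix in
def matB : SpecialLinearGroup (Fin 2) (ZMod 4) := ⟨!![1, 0; -1, 1], by decide⟩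

def toSL : P →* Matrix.SpecialLinearGroup (Fin 2) (ZMod 4) :=
  lift (x := matA) (y := matB) (by decide) (by decide) (by decide)
    (by unfold Commute SemiconjBy; decide)

theorem sq_aba_ne_one : ((of 0 : P) * of 1 * of 0) ^ 2 ≠ 1 := fun h => by
  have h' := congrArg toSL h
  rw [map_one, map_pow, map_mul, map_mul, toSL, lift_of_zero, lift_of_one] at h'
  exact absurd h' (by decide)

def permB : Perm (Fin 4) := swap 0 1 * finRotate 4 * swap 0 1

theorem eq_one_of_commute_finRotate_swap (σ : Perm (Fin 4)) (h₁ : Commute σ (finRotate 4))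
    (h₂ : Commute σ (swap 0 1)) : σ = 1 := by
  revert σ
  unfold Commute SemiconjBy
  decide

def toPerm : P →* Perm (Fin 4) :=
  lift (x := finRotate 4) (y := permB) (by decide) (by decide) (by decide)
    (by unfold Commute SemiconjBy; decide)

theorem toPerm_of_zero : toPerm (of 0) = finRotate 4 := lift_of_zero ..

theorem toPerm_aba : toPerm (of 0 * of 1 * of 0) = swap 0 1 := by
  simp only [toPerm, map_mul, lift_of_zero, lift_of_one]
  decide

theorem toPerm_surjective : Function.Surjective toPerm := by
  rw [← MonoidHom.range_eq_top, eq_top_iff,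
    ← Perm.closure_cycle_adjacent_swap isCycle_finRotate support_finRotate 0, closure_le,
    Set.insert_subset_iff, Set.singleton_subset_iff]
  exact ⟨⟨of 0, toPerm_of_zero⟩, ⟨of 0 * of 1 * of 0, toPerm_aba⟩⟩

theorem card_eq_and_card_ker_toPerm : Nat.card P = 48 ∧ Nat.card toPerm.ker = 2 := by
  obtain ⟨ha, hb, hab, hc⟩ := relations
  obtain ⟨hfin, hle⟩ := finite_and_card_le_48_of_braid closure_of_eq_top ha hb hab hc
  have hker : Nat.card P = 24 * Nat.card toPerm.ker := by
    rw [card_eq_card_quotient_mul_card_subgroup toPerm.ker,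
      Nat.card_congr (QuotientGroup.quotientKerEquivOfSurjective _ toPerm_surjective).toEquiv,
      Nat.card_perm, Nat.card_fin]
    rfl
  have htwo : 1 < Nat.card toPerm.ker := by
    rw [one_lt_card_iff_ne_bot, ne_eq, eq_bot_iff]
    intro h
    refine sq_aba_ne_one (h ?_)
    rw [MonoidHom.mem_ker, map_pow, toPerm_aba, sq, swap_mul_self]
  omega

theorem center_eq_ker_toPerm : center P = toPerm.ker := by
  refine le_antisymm (fun g hg => ?_) (le_center_of_card_eq_two card_eq_and_card_ker_toPerm.2)
  have hcomm (x : P) : Commute (toPerm g) (toPerm x) := by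
    simpa only [Commute, SemiconjBy, ← map_mul] using
      congrArg toPerm (mem_center_iff.mp hg x).symm
  exact eq_one_of_commute_finRotate_swap _ (toPerm_of_zero ▸ hcomm (of 0))
    (toPerm_aba ▸ hcomm _)

end Stmt9

/-- The group `⟨a, b ∣ a⁴ = b⁴ = 1, aba = bab, [a²,b²] = 1⟩` has order
48, its center has order 2, and its quotient by the center is isomorphic to `S₄`. -/
theorem stmt_9 :
    Nat.card (PresentedGroup stmt9Rels) = 48 ∧
    Nat.card (Subgroup.center (PresentedGroup stmt9Rels)) = 2 ∧
    Nonempty ((PresentedGroup stmt9Rels ⧸ Subgroup.center (PresentedGroup stmt9Rels)) ≃*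
      Equiv.Perm (Fin 4)) := by
  obtain ⟨hcard, hker⟩ := Stmt9.card_eq_and_card_ker_toPerm
  refine ⟨hcard, Stmt9.center_eq_ker_toPerm ▸ hker, ⟨?_⟩⟩
  exact (QuotientGroup.quotientMulEquivOfEq Stmt9.center_eq_ker_toPerm).trans
    (QuotientGroup.quotientKerEquivOfSurjective _ Stmt9.toPerm_surjective)
end
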